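/- arXiv:1702.01883 — 2 statements merged into one kernel-verified Lean document; each statement's English description precedes it below -/
import Mathlib

section
/- Let G be a finite group and H a normal subgroup of G of prime index q. If θ is an irreducible complex character of H that is invariant in G, i.e. I_G(θ) = G, then θ is extendible to G: there exists an irreducible complex character χ of G with Res_H^G χ = θ. -/
open scoped BigOperators ComplexOrder

noncomputable section

/-- `χ : G → ℂ` is an irreducible character of `G` if it is the character of some
irreducible (simple) finite-dimensional complex representation of `G`. -/
def IsIrreducibleCharacter (G : Type) [Group G] (χ : G → ℂ) : Prop :=
  ∃ V : FDRep ℂ G, CategoryTheory.Simple V ∧ χ = V.character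

open Classical in
/-- Extension of a class function on a subgroup `H` by zero to all of `G`. -/
def extChar {G : Type} [Group G] (H : Subgroup G) (θ : ↥H → ℂ) : G → ℂ :=
  fun x => if hx : x ∈ H then θ ⟨x, hx⟩ else 0

theorem extChar_apply_of_mem {G : Type} [Group G] {H : Subgroup G} (θ : ↥H → ℂ) {x : G}
    (hx : x ∈ H) : extChar H θ x = θ ⟨x, hx⟩ := dif_pos hx

/-- The conjugate `θ^g` of a character `θ` of a (normal) subgroup `H`, `θ^g(h) = θ(g h g⁻¹)`. -/
def conjChar {G : Type} [Group G] (H : Subgroup G) (θ : ↥H → ℂ) (g : G) : ↥H → ℂ :=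
  fun h => extChar H θ (g * (h : G) * g⁻¹)

/-- The inertia group `I_G(θ) = {g ∈ G : θ^g = θ}` of a character of a normal subgroup. -/
def inertia {G : Type} [Group G] (H : Subgroup G) (hH : H.Normal) (θ : ↥H → ℂ) :
    Subgroup G where
  carrier := {g | conjChar H θ g = θ}
  one_mem' := by
    funext h
    show extChar H θ (1 * (h : G) * 1⁻¹) = θ h
    rw [show (1 : G) * (h : G) * 1⁻¹ = (h : G) by group, extChar_apply_of_mem θ h.2]
  mul_mem' := by
    intro a b ha hb
    funext h
    have hbm : b * (h : G) * b⁻¹ ∈ H := hH.conj_mem _ h.2 b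
    have h1 : extChar H θ (a * (b * (h : G) * b⁻¹) * a⁻¹) = θ ⟨b * (h : G) * b⁻¹, hbm⟩ :=
      congrFun ha (⟨b * (h : G) * b⁻¹, hbm⟩ : ↥H)
    have h2 : extChar H θ (b * (h : G) * b⁻¹) = θ h := congrFun hb h
    show extChar H θ (a * b * (h : G) * (a * b)⁻¹) = θ h
    rw [show a * b * (h : G) * (a * b)⁻¹ = a * (b * (h : G) * b⁻¹) * a⁻¹ by group, h1]
    rw [extChar_apply_of_mem θ hbm] at h2
    exact h2
  inv_mem' := by
    intro a ha
    funext h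
    have ham : a⁻¹ * (h : G) * a⁻¹⁻¹ ∈ H := hH.conj_mem _ h.2 a⁻¹
    have h1 : extChar H θ (a * (a⁻¹ * (h : G) * a⁻¹⁻¹) * a⁻¹) = θ ⟨_, ham⟩ :=
      congrFun ha (⟨a⁻¹ * (h : G) * a⁻¹⁻¹, ham⟩ : ↥H)
    rw [show a * (a⁻¹ * (h : G) * a⁻¹⁻¹) * a⁻¹ = (h : G) by group,
      extChar_apply_of_mem θ h.2] at h1
    show extChar H θ (a⁻¹ * (h : G) * a⁻¹⁻¹) = θ h
    rw [extChar_apply_of_mem θ ham, ← h1]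

/-- The induced character `Ind_H^G θ (g) = |H|⁻¹ ∑_{x ∈ G} θ°(x⁻¹ g x)`. -/
def inducedChar {G : Type} [Group G] (H : Subgroup G) (θ : ↥H → ℂ) : G → ℂ :=
  fun g => (Nat.card H : ℂ)⁻¹ * ∑ᶠ x : G, extChar H θ (x⁻¹ * g * x)

/-- The usual inner product of class functions, `⟨φ, ψ⟩ = |G|⁻¹ ∑_{g} φ(g) conj(ψ(g))`. -/
def charInner (G : Type) [Group G] (φ ψ : G → ℂ) : ℂ :=
  (Nat.card G : ℂ)⁻¹ * ∑ᶠ g : G, φ g * (starRingEnd ℂ) (ψ g)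

end

/-!
Choose `g ∈ G` whose image generates the cyclic group `G/H`, of order `n`. Since `θ` is
`g`-invariant, the representation `V` affording `θ` is isomorphic to its `g`-conjugate, so some
`a ∈ GL(V)` satisfies `a ρ(h) a⁻¹ = ρ(g h g⁻¹)`. Then `ρ(gⁿ)⁻¹ aⁿ` commutes with `ρ(H)` and is
a scalar by Schur's lemma; as `ℂ` is algebraically closed we may rescale `a` so that
`aⁿ = ρ(gⁿ)`. These are exactly the relations needed for `gⁱ h ↦ aⁱ ρ(h)` to be a well defined
homomorphism on `G`, which is a quotient of `H ⋊ ℤ`. Its restriction to `H` is `V`, so it is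
irreducible, and its character extends `θ`.
-/

open CategoryTheory

theorem MonoidHom.zpow_apply_of_apply {H K : Type*} [Group H] [Group K] (ρ : H →* K)
    {ψ : MulAut H} {α : MulAut K} (hα : ∀ h, α (ρ h) = ρ (ψ h)) (n : ℤ) (h : H) :
    (α ^ n) (ρ h) = ρ ((ψ ^ n) h) := by
  induction n using Int.induction_on generalizing h with
  | zero => simp
  | succ n ih => rw [zpow_add_one, zpow_add_one, MulAut.mul_apply, MulAut.mul_apply, hα, ih]
  | pred n ih =>
    have hα' : α⁻¹ (ρ h) = ρ (ψ⁻¹ h) := by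
      conv_lhs => rw [← MulAut.apply_inv_self H ψ h, ← hα, MulAut.inv_apply_self]
    rw [zpow_sub_one, zpow_sub_one, MulAut.mul_apply, MulAut.mul_apply, hα', ih]

theorem MonoidHom.conj_zpow_apply_of_conj_apply {H K : Type*} [Group H] [Group K] (ρ : H →* K)
    {ψ : MulAut H} {a : K} (ha : ∀ h, a * ρ h * a⁻¹ = ρ (ψ h)) (n : ℤ) (h : H) :
    a ^ n * ρ h * (a ^ n)⁻¹ = ρ ((ψ ^ n) h) := by
  simpa [← map_zpow] using ρ.zpow_apply_of_apply (α := MulAut.conj a) ha n h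

theorem MonoidHom.exists_extension_of_zpowers_mk_eq_top {G K : Type*} [Group G] [Group K]
    {H : Subgroup G} [H.Normal] {g : G} (hg : Subgroup.zpowers (g : G ⧸ H) = ⊤)
    (ρ : H →* K) {a : K} (ha : ∀ h, a * ρ h * a⁻¹ = ρ (MulAut.conjNormal g h))
    (c : H) (hc : (c : G) = g ^ orderOf (g : G ⧸ H)) (hac : a ^ orderOf (g : G ⧸ H) = ρ c) :
    ∃ σ : G →* K, ∀ h : H, σ h = ρ h := by
  let φ : Multiplicative ℤ →* MulAut H := zpowersHom _ (MulAut.conjNormal g)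
  let π : H ⋊[φ] Multiplicative ℤ →* G := SemidirectProduct.lift H.subtype (zpowersHom G g)
    fun n => by
      ext h
      simpa [φ] using (H.subtype.zpow_apply_of_apply (ψ := MulAut.conjNormal g)
        (α := MulAut.conj g) (fun h => (MulAut.conjNormal_apply g h).symm) n.toAdd h).symm
  let τ : H ⋊[φ] Multiplicative ℤ →* K := SemidirectProduct.lift ρ (zpowersHom K a)
    fun n => by
      ext h
      simpa [φ] using (ρ.zpow_apply_of_apply (α := MulAut.conj a) ha n.toAdd h).symm
  have hπ : Function.Surjective π := by
    intro x
    obtain ⟨n, hn⟩ := Subgroup.mem_zpowers_iff.mp (hg ▸ Subgroup.mem_top (x : G ⧸ H))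
    rw [← QuotientGroup.mk_zpow, QuotientGroup.eq] at hn
    refine ⟨SemidirectProduct.inr (.ofAdd n) * SemidirectProduct.inl ⟨_, hn⟩, ?_⟩
    simp [π]
  have hker : π.ker ≤ τ.ker := by
    rintro ⟨h, n⟩ hy
    have hh : (h : G) = (g ^ n.toAdd)⁻¹ := eq_inv_of_mul_eq_one_left hy
    obtain ⟨m, hm⟩ : (orderOf (g : G ⧸ H) : ℤ) ∣ n.toAdd := by
      rw [orderOf_dvd_iff_zpow_eq_one, ← QuotientGroup.mk_zpow, QuotientGroup.eq_one_iff,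
        ← inv_mem_iff, ← hh]
      exact h.2
    have hhc : h * c ^ m = 1 := by
      ext
      simp [hh, hc, hm, zpow_mul]
    show ρ h * a ^ n.toAdd = 1
    rw [hm, zpow_mul, zpow_natCast, hac, ← map_zpow, ← map_mul, hhc, map_one]
  refine ⟨π.liftOfSurjective hπ ⟨τ, hker⟩, fun h => ?_⟩
  simpa [π, τ] using π.liftOfRightInverse_comp_apply _ _ ⟨τ, hker⟩ (SemidirectProduct.inl h)

instance {k G H : Type*} [Field k] [Monoid G] [Monoid H] (f : H →* G) :
    (Action.res (FGModuleCat k) f).PreservesMonomorphisms where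
  preserves g _ := (Action.forget _ _).mono_of_mono_map
    (show Mono ((Action.forget (FGModuleCat k) G).map g) from inferInstance)

namespace FDRep

variable {k : Type*} [Field k]

theorem nontrivial_of_simple {G : Type*} [Monoid G] (V : FDRep k G) [Simple V] :
    Nontrivial V := by
  by_contra h
  rw [not_nontrivial_iff_subsingleton] at h
  exact id_nonzero V (by ext x; exact Subsingleton.elim _ _)

theorem simple_of_comp_eq {G H : Type*} [Monoid G] [Monoid H] (f : H →* G) (V : FDRep k H)
    [Simple V] (σ : Representation k G V) (hσ : σ.comp f = V.ρ) : Simple (FDRep.of σ) := by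
  have : Simple ((Action.res _ f).obj (FDRep.of σ)) :=
    Simple.of_iso (Action.mkIso (Iso.refl _) fun h => by
      ext x; change σ (f h) x = V.ρ h x; rw [← hσ]; rfl :
      (Action.res _ f).obj (FDRep.of σ) ≅ V)
  exact (Action.res _ f).simple_of_simple_obj _

theorem exists_eq_smul_one_of_commute [IsAlgClosed k] {G : Type*} [Monoid G] (V : FDRep k G)
    [Simple V] (S : Module.End k V) (hS : ∀ g, Commute S (V.ρ g)) : ∃ c : k, S = c • 1 := by
  obtain ⟨c, hc⟩ := endomorphism_simple_eq_smul_id k (X := V)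
    (Action.Hom.mk (FGModuleCat.ofHom S) fun g => by
      ext x; change S (V.ρ g x) = V.ρ g (S x); exact LinearMap.congr_fun (hS g) x)
  refine ⟨c, ?_⟩
  ext x
  exact (congrArg (fun φ : V ⟶ V => φ.hom.hom.hom x) hc).symm

theorem nonempty_iso_of_character_eq [IsAlgClosed k] {G : Type*} [Group G] [Finite G]
    [NeZero (Nat.card G : k)] (V W : FDRep k G) [Simple V] [Simple W]
    (h : V.character = W.character) : Nonempty (V ≅ W) := by
  have := Fintype.ofFinite G
  have := invertibleOfNonzero (NeZero.ne (Nat.card G : k))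
  by_contra hne
  have hVW := char_orthonormal V W
  have hWW := char_orthonormal W W
  rw [h, if_neg hne] at hVW
  rw [if_pos ⟨Iso.refl W⟩, hVW] at hWW
  exact zero_ne_one hWW

theorem exists_conj_eq_of_character_apply_eq [IsAlgClosed k] {G : Type*} [Group G] [Finite G]
    [NeZero (Nat.card G : k)] (V : FDRep k G) [Simple V] (ψ : MulAut G)
    (hψ : ∀ g, V.character (ψ g) = V.character g) :
    ∃ a : (V →ₗ[k] V)ˣ,
      ∀ g, a * Representation.asGroupHom V.ρ g * a⁻¹ = Representation.asGroupHom V.ρ (ψ g) := by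
  let V' := (Action.resEquiv (FGModuleCat k) ψ).functor.obj V
  have : Simple V' := simple_obj _ V
  obtain ⟨i⟩ := nonempty_iso_of_character_eq V V' (funext fun g => (hψ g).symm)
  let T := isoToLinearEquiv i
  refine ⟨LinearMap.GeneralLinearGroup.ofLinearEquiv T, fun g => ?_⟩
  ext x
  exact (LinearMap.congr_fun (Iso.conj_ρ i g) x).symm

theorem exists_conj_eq_and_pow_eq [IsAlgClosed k] {G : Type*} [Group G] (V : FDRep k G)
    [Simple V] {ψ : MulAut G} {a : (V →ₗ[k] V)ˣ}
    (ha : ∀ g, a * Representation.asGroupHom V.ρ g * a⁻¹ = Representation.asGroupHom V.ρ (ψ g))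
    {n : ℕ} (hn : 0 < n) (c : G) (hc : ∀ g, (ψ ^ n) g = c * g * c⁻¹) :
    ∃ b : (V →ₗ[k] V)ˣ,
      (∀ g, b * Representation.asGroupHom V.ρ g * b⁻¹ = Representation.asGroupHom V.ρ (ψ g)) ∧
      b ^ n = Representation.asGroupHom V.ρ c := by
  set ρ := Representation.asGroupHom V.ρ
  have hz : ∀ g, Commute ((ρ c)⁻¹ * a ^ n) (ρ g) := fun g => by
    have := (ρ.conj_zpow_apply_of_conj_apply ha n g).trans (congrArg ρ (hc g))
    rw [zpow_natCast, map_mul, map_mul, map_inv] at this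
    rw [Commute, SemiconjBy, mul_assoc, mul_inv_eq_iff_eq_mul.mp this]
    group
  obtain ⟨l, hl⟩ := exists_eq_smul_one_of_commute V _ fun g => by
    rw [← Representation.asGroupHom_apply]; exact (hz g).units_val
  have : Nontrivial V := nontrivial_of_simple V
  have hl0 : l ≠ 0 := by
    rintro rfl
    exact Units.ne_zero _ (hl.trans (zero_smul _ _))
  obtain ⟨μ, hμ⟩ := IsAlgClosed.exists_pow_nat_eq l hn
  have hμ0 : μ ≠ 0 := by rintro rfl; exact hl0 (by rw [← hμ, zero_pow hn.ne'])
  let w : (V →ₗ[k] V)ˣ := Units.map (algebraMap k (Module.End k V) : k →* Module.End k V)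
    (Units.mk0 μ hμ0)
  have hw : ∀ u, Commute w u := fun u => Units.ext (Algebra.commutes μ (u : Module.End k V))
  have hwn : w ^ n = (ρ c)⁻¹ * a ^ n := by
    ext1
    rw [hl]
    simp [w, ← hμ, Algebra.algebraMap_eq_smul_one, smul_pow]
  refine ⟨a * w⁻¹, fun g => ?_, ?_⟩
  · rw [← ha g, mul_inv_rev, inv_inv,
      show a * w⁻¹ * ρ g * (w * a⁻¹) = a * (w⁻¹ * (ρ g * w)) * a⁻¹ by group, ← (hw (ρ g)).eq,
      inv_mul_cancel_left]
  · rw [(hw a).inv_left.symm.mul_pow, inv_pow, hwn]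
    group

theorem exists_simple_extension_of_isCyclic [IsAlgClosed k] {G : Type*} [Group G]
    {H : Subgroup G} [H.Normal] [Finite H] [NeZero (Nat.card H : k)] [IsCyclic (G ⧸ H)]
    [Finite (G ⧸ H)] (V : FDRep k H) [Simple V]
    (hV : ∀ g h, V.character (MulAut.conjNormal g h) = V.character h) :
    ∃ W : FDRep k G, Simple W ∧ ∀ h : H, W.character h = V.character h := by
  obtain ⟨x, hx⟩ := IsCyclic.exists_generator (α := G ⧸ H)
  obtain ⟨g, rfl⟩ := QuotientGroup.mk_surjective x
  have hgn : g ^ orderOf (g : G ⧸ H) ∈ H := by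
    rw [← QuotientGroup.eq_one_iff, QuotientGroup.mk_pow, pow_orderOf_eq_one]
  obtain ⟨a, ha⟩ := exists_conj_eq_of_character_apply_eq V _ (hV g)
  obtain ⟨b, hb, hbn⟩ := exists_conj_eq_and_pow_eq V ha (orderOf_pos (g : G ⧸ H)) ⟨_, hgn⟩
    fun h => by ext; simp [← map_pow, MulAut.conjNormal_apply]
  obtain ⟨σ, hσ⟩ := (Representation.asGroupHom V.ρ).exists_extension_of_zpowers_mk_eq_top
    (Subgroup.eq_top_iff' _ |>.mpr hx) hb ⟨_, hgn⟩ rfl hbn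
  have hσV : ((Units.coeHom _).comp σ).comp H.subtype = V.ρ := by
    ext1 h
    simp [hσ, Representation.asGroupHom_apply]
  exact ⟨_, simple_of_comp_eq H.subtype V _ hσV,
    fun h => congrArg (LinearMap.trace k V) (DFunLike.congr_fun hσV h)⟩

end FDRep

theorem conjChar_eq_comp_conjNormal {G : Type} [Group G] {H : Subgroup G} [H.Normal]
    (θ : ↥H → ℂ) (g : G) : conjChar H θ g = θ ∘ MulAut.conjNormal g := by
  funext h
  rw [conjChar, extChar_apply_of_mem θ (‹H.Normal›.conj_mem _ h.2 g)]
  congr 1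

/-- **Gallagher's extension theorem.** If `H ⊴ G` has prime index `q` and `θ ∈ Irr(H)`
is invariant in `G` (i.e. `I_G(θ) = G`), then `θ` extends to an irreducible character
of `G`. -/
theorem exists_extension_of_invariant
    {G : Type} [Group G] [Fintype G] (H : Subgroup G) (hH : H.Normal)
    (q : ℕ) (hq : q.Prime) (hind : H.index = q)
    (θ : ↥H → ℂ) (hθ : IsIrreducibleCharacter ↥H θ)
    (hinv : inertia H hH θ = ⊤) :
    ∃ χ : G → ℂ, IsIrreducibleCharacter G χ ∧ (fun h : ↥H => χ (h : G)) = θ := by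
  obtain ⟨V, hV, rfl⟩ := hθ
  have : Fact q.Prime := ⟨hq⟩
  have : IsCyclic (G ⧸ H) := isCyclic_of_prime_card (p := q) (H.index_eq_card ▸ hind)
  have hVinv (g : G) (h : H) : V.character (MulAut.conjNormal g h) = V.character h := by
    have hg : conjChar H V.character g = V.character := (hinv ▸ Subgroup.mem_top g :)
    rw [conjChar_eq_comp_conjNormal] at hg
    exact congrFun hg h
  obtain ⟨W, hW, hWV⟩ := FDRep.exists_simple_extension_of_isCyclic V hVinv
  exact ⟨W.character, ⟨W, hW, rfl⟩, funext hWV⟩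
end

section
/- Let G be a finite group, H a normal subgroup of G, and suppose θ is an irreducible complex character of H that extends to an irreducible complex character χ of G (i.e. Res_H^G χ = θ). Then for every irreducible complex character β of the quotient group G/H, the product character g ↦ χ(g)·β(gH) is an irreducible complex character of G. -/
open scoped BigOperators ComplexOrder

/-!
Gallagher's argument through the norm criterion: a complex representation `T` of a finite group
is irreducible iff `∑ g, χ_T g * χ_T g⁻¹ = |G|`. For `T = V ⊗ W̃` this sum splits over the cosets
`xH` as `∑ β(xH) β(xH)⁻¹ · ∑_{h ∈ H} χ(xh) χ(xh)⁻¹`. The inner sum is the trace of `|H| • (x ∘ P)`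
on `End V`, where `P` averages over `H` and projects onto `End_H V`. Since `V` stays irreducible
on `H`, `End_H V` consists of scalars, which `x` fixes, so every inner sum equals `|H|` and the
whole sum is `|H| · |G/H| = |G|`.
-/

open Module Representation CategoryTheory MonoidalCategory

namespace QuotientGroup

variable {G M : Type*} [Group G] [Fintype G] (H : Subgroup G) [Fintype H] [Fintype (G ⧸ H)]

theorem sum_eq_sum_out_mul [AddCommMonoid M] (f : G → M) :
    ∑ g, f g = ∑ q : G ⧸ H, ∑ h : H, f (q.out * h) := by
  rw [← Fintype.sum_prod_type']
  refine (Fintype.sum_bijective (fun p : (G ⧸ H) × H => p.1.out * p.2) ⟨?_, ?_⟩ _ _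
    fun _ => rfl).symm
  · rintro ⟨q₁, h₁⟩ ⟨q₂, h₂⟩ heq
    have hq : q₁ = q₂ := by
      simpa [mk_mul_of_mem _ h₁.2, mk_mul_of_mem _ h₂.2] using congrArg ((↑) : G → G ⧸ H) heq
    subst hq
    simpa using heq
  · intro g
    exact ⟨(g, ⟨(g : G ⧸ H).out⁻¹ * g, leftRel_apply.mp (Quotient.exact' (out_eq' _))⟩),
      mul_inv_cancel_left _ _⟩

theorem sum_mul_mk_of_sum_coset_eq {R : Type*} [CommSemiring R] {a : G → R} {c : R}
    (ha : ∀ x, ∑ h : H, a (x * h) = c) (b : G ⧸ H → R) :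
    ∑ g, a g * b g = c * ∑ q, b q := by
  rw [sum_eq_sum_out_mul H, Finset.mul_sum]
  refine Finset.sum_congr rfl fun q _ => ?_
  simp_rw [mk_mul_of_mem _ (Subtype.prop _), out_eq', ← Finset.sum_mul, ha]

end QuotientGroup

namespace Representation

variable {k G V : Type*} [Field k] [Group G] [AddCommGroup V] [Module k V]
  (ρ : Representation k G V) (H : Subgroup G)

theorem invariants_le_invariants_comp_subtype :
    invariants ρ ≤ invariants (ρ.comp H.subtype) :=
  fun _ hv h => hv h

theorem invariants_comp_subtype_eq_of_finrank_eq [FiniteDimensional k V]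
    (h : finrank k (invariants (ρ.comp H.subtype)) = finrank k (invariants ρ)) :
    invariants (ρ.comp H.subtype) = invariants ρ :=
  (Submodule.eq_of_le_of_finrank_le (invariants_le_invariants_comp_subtype ρ H) h.le).symm

theorem sum_character_mul_of_invariants_comp_subtype_le [FiniteDimensional k V] [Fintype H]
    [Invertible (Fintype.card H : k)] (hH : invariants (ρ.comp H.subtype) ≤ invariants ρ)
    (x : G) :
    ∑ h : H, ρ.character (x * h) = Fintype.card H * finrank k (invariants (ρ.comp H.subtype)) := by
  set τ := ρ.comp H.subtype
  have havg : ∑ h : H, τ h = (Fintype.card H : k) • averageMap τ := by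
    simp [averageMap, GroupAlgebra.average, map_sum, smul_smul]
  have hsum : ∑ h : H, ρ (x * h) = (Fintype.card H : k) • (ρ x ∘ₗ averageMap τ) := by
    simp only [map_mul, ← Finset.mul_sum]
    rw [show ∑ h : H, ρ h = ∑ h : H, τ h from rfl, havg, mul_smul_comm, Module.End.mul_eq_comp]
  have hfix : ρ x ∘ₗ averageMap τ = averageMap τ :=
    LinearMap.ext fun v => hH (averageMap_invariant τ v) x
  simp only [character, ← map_sum, hsum, hfix, map_smul, (isProj_averageMap τ).trace, smul_eq_mul]

end Representation

namespace FDRep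

variable {k G : Type} [Field k] [Group G]

theorem character_of_comp {K : Type} [Group K] (V : FDRep k K) (f : G →* K) (g : G) :
    (FDRep.of (V.ρ.comp f)).character g = V.character (f g) :=
  rfl

variable [IsAlgClosed k]

theorem simple_of_character_eq [CharZero k] [Finite G] {V W : FDRep k G} [Simple W]
    (h : V.character = W.character) : Simple V := by
  have := Fintype.ofFinite G
  rw [simple_iff_char_is_norm_one, h, ← simple_iff_char_is_norm_one]
  infer_instance

theorem finrank_invariants_linHom_self (X : FDRep k G) [Simple X] :
    finrank k (invariants (linHom X.ρ X.ρ)) = 1 := by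
  rw [(linHom.invariantsEquivFDRepHom X X).finrank_eq]
  exact finrank_endomorphism_simple_eq_one k X

theorem sum_character_mul_character_inv_coset (V : FDRep k G) [Simple V] (H : Subgroup G)
    [Simple (FDRep.of (V.ρ.comp H.subtype))] [Fintype H] [Invertible (Fintype.card H : k)]
    (x : G) :
    ∑ h : H, V.character (x * h) * V.character (x * h)⁻¹ = Fintype.card H := by
  -- By Schur both invariant spaces are lines, so the inclusion between them is an equality.
  have hres : invariants ((linHom V.ρ V.ρ).comp H.subtype) = invariants (linHom V.ρ V.ρ) :=
    invariants_comp_subtype_eq_of_finrank_eq _ _ <| by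
      rw [finrank_invariants_linHom_self V,
        ← finrank_invariants_linHom_self (FDRep.of (V.ρ.comp H.subtype))]
      rfl
  have := sum_character_mul_of_invariants_comp_subtype_le _ H hres.le x
  rw [hres, finrank_invariants_linHom_self V, Nat.cast_one, mul_one] at this
  simp only [Representation.char_linHom, mul_comm (Representation.character _ _⁻¹)] at this
  exact this

theorem simple_tensor_comp_mk'_of_simple_comp_subtype [CharZero k] [Finite G] (H : Subgroup G)
    [H.Normal] (V : FDRep k G) [Simple V] [Simple (FDRep.of (V.ρ.comp H.subtype))]
    (W : FDRep k (G ⧸ H)) [Simple W] :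
    Simple (V ⊗ FDRep.of (W.ρ.comp (QuotientGroup.mk' H))) := by
  classical
  have := Fintype.ofFinite G
  have : Invertible (Fintype.card H : k) := invertibleOfNonzero (by simp)
  rw [simple_iff_char_is_norm_one]
  calc ∑ g, (V ⊗ FDRep.of (W.ρ.comp (QuotientGroup.mk' H))).character g *
          (V ⊗ FDRep.of (W.ρ.comp (QuotientGroup.mk' H))).character g⁻¹
      = ∑ g, V.character g * V.character g⁻¹ * (W.character g * W.character (g : G ⧸ H)⁻¹) := by
        simp only [char_tensor, Pi.mul_apply, character_of_comp, QuotientGroup.mk'_apply,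
          QuotientGroup.mk_inv]
        exact Finset.sum_congr rfl fun g _ => by ring
    _ = Nat.card H * ∑ q, W.character q * W.character q⁻¹ :=
        QuotientGroup.sum_mul_mk_of_sum_coset_eq H
          (a := fun g => V.character g * V.character g⁻¹) (fun x => by
            rw [sum_character_mul_character_inv_coset V H x, Nat.card_eq_fintype_card])
          (fun q => W.character q * W.character q⁻¹)
    _ = Nat.card G := by
        rw [(simple_iff_char_is_norm_one W).1 ‹_›, H.card_eq_card_quotient_mul_card_subgroup]
        push_cast
        ring

end FDRep

/-- **Gallagher.** If `θ ∈ Irr(H)` extends to `χ ∈ Irr(G)`, then for every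
`β ∈ Irr(G/H)` the product `χ · β̃` (with `β̃` the lift of `β` to `G`) is an
irreducible character of `G`. -/
theorem isIrreducibleCharacter_mul_lift
    {G : Type} [Group G] [Fintype G] (H : Subgroup G) [hH : H.Normal]
    (θ : ↥H → ℂ) (hθ : IsIrreducibleCharacter ↥H θ)
    (χ : G → ℂ) (hχ : IsIrreducibleCharacter G χ)
    (hres : (fun h : ↥H => χ (h : G)) = θ)
    (β : G ⧸ H → ℂ) (hβ : IsIrreducibleCharacter (G ⧸ H) β) :
    IsIrreducibleCharacter G (fun g : G => χ g * β (QuotientGroup.mk g)) := by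
  obtain ⟨U, hU, rfl⟩ := hθ
  obtain ⟨V, hV, rfl⟩ := hχ
  obtain ⟨W, hW, rfl⟩ := hβ
  have : Simple (FDRep.of (V.ρ.comp H.subtype)) :=
    FDRep.simple_of_character_eq (W := U) (funext fun h => congrFun hres h)
  refine ⟨_, FDRep.simple_tensor_comp_mk'_of_simple_comp_subtype H V W, ?_⟩
  ext g
  rw [FDRep.char_tensor, Pi.mul_apply, FDRep.character_of_comp]
  rfl
end
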